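/- arXiv:1708.01989 — 2 statements merged into one kernel-verified Lean document; each statement's English description precedes it below -/
import Mathlib

section
/- Let η, η', η'' be nonzero vectors in ℝⁿ and ε > 0. If |η - η'| ≤ ε|η|, then |cos(η'', η) - cos(η'', η')| ≤ 2ε. -/
/-! The difference of the two cosines is the inner product of `η'' / ‖η''‖` with
`η / ‖η‖ - η' / ‖η'‖`, so it is bounded by the distance between the normalised vectors.
Normalising at most doubles distances relative to `‖η‖`: `‖η‖ • (η / ‖η‖ - η' / ‖η'‖)` differs
from `η - η'` by a multiple of `η'` of length `|‖η'‖ - ‖η‖| ≤ ‖η - η'‖`. -/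

section Normalize

variable {E : Type*} [NormedAddCommGroup E] [NormedSpace ℝ E]

theorem norm_mul_norm_inv_smul_sub_inv_smul_le (u v : E) :
    ‖u‖ * ‖‖u‖⁻¹ • u - ‖v‖⁻¹ • v‖ ≤ 2 * ‖u - v‖ := by
  rcases eq_or_ne u 0 with rfl | hu
  · simp
  rcases eq_or_ne v 0 with rfl | hv
  · simp [norm_smul, hu]
  have hu' : 0 < ‖u‖ := norm_pos_iff.mpr hu
  have hv' : 0 < ‖v‖ := norm_pos_iff.mpr hv
  have hsplit : ‖u‖ • (‖u‖⁻¹ • u - ‖v‖⁻¹ • v) = (u - v) + ((‖v‖ - ‖u‖) * ‖v‖⁻¹) • v := by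
    rw [smul_sub, smul_smul, smul_smul, mul_inv_cancel₀ hu'.ne', one_smul, sub_mul,
      mul_inv_cancel₀ hv'.ne', sub_smul, one_smul]
    abel
  have hradial : ‖((‖v‖ - ‖u‖) * ‖v‖⁻¹) • v‖ ≤ ‖u - v‖ := by
    rw [norm_smul, Real.norm_eq_abs, abs_mul, abs_inv, abs_norm, mul_assoc,
      inv_mul_cancel₀ hv'.ne', mul_one, norm_sub_rev u v]
    exact abs_norm_sub_norm_le v u
  calc ‖u‖ * ‖‖u‖⁻¹ • u - ‖v‖⁻¹ • v‖
      = ‖‖u‖ • (‖u‖⁻¹ • u - ‖v‖⁻¹ • v)‖ := by rw [norm_smul, norm_norm]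
    _ ≤ ‖u - v‖ + ‖((‖v‖ - ‖u‖) * ‖v‖⁻¹) • v‖ := hsplit ▸ norm_add_le _ _
    _ ≤ 2 * ‖u - v‖ := by linarith

end Normalize

section Cosine

variable {F : Type*} [NormedAddCommGroup F] [InnerProductSpace ℝ F]

theorem real_inner_div_norm_mul_norm_eq (w x : F) :
    inner ℝ w x / (‖w‖ * ‖x‖) = inner ℝ w (‖x‖⁻¹ • x) / ‖w‖ := by
  rw [real_inner_smul_right, mul_comm ‖w‖, ← div_div, div_eq_inv_mul _ ‖x‖]

theorem abs_cos_sub_cos_le_norm_normalize_sub (w x y : F) :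
    |inner ℝ w x / (‖w‖ * ‖x‖) - inner ℝ w y / (‖w‖ * ‖y‖)| ≤ ‖‖x‖⁻¹ • x - ‖y‖⁻¹ • y‖ := by
  rw [real_inner_div_norm_mul_norm_eq, real_inner_div_norm_mul_norm_eq, ← sub_div,
    ← inner_sub_right, abs_div, abs_norm]
  exact div_le_of_le_mul₀ (norm_nonneg w) (norm_nonneg _)
    ((abs_real_inner_le_norm _ _).trans_eq (mul_comm _ _))

end Cosine

theorem stmt_1_general (n : ℕ) (η η' η'' : EuclideanSpace ℝ (Fin n))
    (hη : η ≠ 0) (ε : ℝ)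
    (h : ‖η - η'‖ ≤ ε * ‖η‖) :
    |inner ℝ η'' η / (‖η''‖ * ‖η‖) - inner ℝ η'' η' / (‖η''‖ * ‖η'‖)| ≤ 2 * ε := by
  have hnorm : 0 < ‖η‖ := norm_pos_iff.mpr hη
  have hscaled : ‖η‖ * ‖‖η‖⁻¹ • η - ‖η'‖⁻¹ • η'‖ ≤ ‖η‖ * (2 * ε) := by
    linarith [norm_mul_norm_inv_smul_sub_inv_smul_le η η']
  exact (abs_cos_sub_cos_le_norm_normalize_sub η'' η η').trans
    (le_of_mul_le_mul_left hscaled hnorm)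

theorem stmt_1 (n : ℕ) (η η' η'' : EuclideanSpace ℝ (Fin n))
    (hη : η ≠ 0) (hη' : η' ≠ 0) (hη'' : η'' ≠ 0) (ε : ℝ) (hε : 0 < ε)
    (h : ‖η - η'‖ ≤ ε * ‖η‖) :
    |inner ℝ η'' η / (‖η''‖ * ‖η‖) - inner ℝ η'' η' / (‖η''‖ * ‖η'‖)| ≤ 2 * ε :=
  stmt_1_general n η η' η'' hη ε h
end

section
/- Suppose the positive real function v(t) = |z(t)|² is twice differentiable on [0, T] and satisfies v(0) = |x|², v'(0) ≥ -4σ|x||ξ| - C R^{-μ}|x||ξ|, and v''(t) ≥ (M/2)|ξ|² for all t ∈ [0, T], where M > 0, |ξ| > 0, |x| ≥ R and σ, C, R, μ > 0. If σ and R^{-μ} are small enough (depending only on M and C), then v(t) ≥ e₀²(|x| + t|ξ|)² for all t ∈ [0, T], for some constant e₀ > 0 depending only on M, σ, C, R, μ. -/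
/-- If f has nonnegative derivative on [0,T], then f 0 ≤ f t for t in [0,T]. -/
lemma mono_aux {T : ℝ} {f f' : ℝ → ℝ}
    (hf : ∀ t ∈ Set.Icc (0 : ℝ) T, HasDerivAt f (f' t) t)
    (hf' : ∀ t ∈ Set.Icc (0 : ℝ) T, 0 ≤ f' t) :
    ∀ t ∈ Set.Icc (0 : ℝ) T, f 0 ≤ f t := by
  intro t ht
  have hmono : MonotoneOn f (Set.Icc (0 : ℝ) T) := by
    apply monotoneOn_of_deriv_nonneg (convex_Icc 0 T)
    · exact fun x hx => (hf x hx).continuousAt.continuousWithinAt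
    · intro x hx
      rw [interior_Icc] at hx
      exact (hf x (Set.mem_Icc_of_Ioo hx)).differentiableAt.differentiableWithinAt
    · intro x hx
      rw [interior_Icc] at hx
      rw [(hf x (Set.mem_Icc_of_Ioo hx)).deriv]
      exact hf' x (Set.mem_Icc_of_Ioo hx)
  exact hmono (Set.left_mem_Icc.2 (ht.1.trans ht.2)) ht ht.1


/-- The discriminant/quadratic estimate. -/
lemma quad_aux {m M X s : ℝ} (hm0 : 0 < m) (hm1 : m ≤ 1) (hmM : m ≤ M)
    (hX : 0 ≤ X) (hs : 0 ≤ s) :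
    m / 16 * (X + s) ^ 2 ≤ X ^ 2 - m / 16 * X * s + M / 4 * s ^ 2 := by
  nlinarith [mul_nonneg hm0.le (sq_nonneg (X - s)), mul_nonneg hm0.le (sq_nonneg X),
    mul_nonneg hm0.le (sq_nonneg s), mul_nonneg (sub_nonneg.2 hmM) (sq_nonneg s),
    sq_nonneg X, sq_nonneg s]

theorem stmt_10 (M C : ℝ) (hM : 0 < M) (hC : 0 < C) :
    ∃ σ₀ > 0, ∃ δ > 0, ∀ σ R μ : ℝ, 0 < σ → σ < σ₀ → 0 < R → 0 < μ → R ^ (-μ) < δ →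
      ∃ e₀ > 0, ∀ (T : ℝ) (v v' v'' : ℝ → ℝ) (X Ξ : ℝ),
        0 ≤ T → R ≤ X → 0 < Ξ →
        (∀ t ∈ Set.Icc (0 : ℝ) T, 0 ≤ v t) →
        (∀ t ∈ Set.Icc (0 : ℝ) T, HasDerivAt v (v' t) t) →
        (∀ t ∈ Set.Icc (0 : ℝ) T, HasDerivAt v' (v'' t) t) →
        v 0 = X ^ 2 →
        v' 0 ≥ -4 * σ * X * Ξ - C * R ^ (-μ) * X * Ξ →
        (∀ t ∈ Set.Icc (0 : ℝ) T, v'' t ≥ (M / 2) * Ξ ^ 2) →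
        ∀ t ∈ Set.Icc (0 : ℝ) T, v t ≥ e₀ ^ 2 * (X + t * Ξ) ^ 2 := by
  set m : ℝ := min M 1 with hm
  have hm0 : 0 < m := lt_min hM one_pos
  have hm1 : m ≤ 1 := min_le_right _ _
  have hmM : m ≤ M := min_le_left _ _
  refine ⟨m / 128, by positivity, m / (32 * C), by positivity, ?_⟩
  intro σ R μ hσ hσ₀ hR hμ hRδ
  refine ⟨Real.sqrt m / 4, by positivity, ?_⟩
  intro T v v' v'' X Ξ hT hX hΞ hv0 hdv hdv' hv00 hv'0 hv''
  have hX0 : (0 : ℝ) < X := hR.trans_le hX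
  have hRμ : 0 < R ^ (-μ) := Real.rpow_pos_of_pos hR _
  -- e² = m/16
  have he2 : (Real.sqrt m / 4) ^ 2 = m / 16 := by
    rw [div_pow, Real.sq_sqrt hm0.le]; norm_num
  rw [he2]
  -- a = 4σ + C R^{-μ} < m/16
  have ha : 4 * σ + C * R ^ (-μ) < m / 16 := by
    have h1 : 4 * σ < m / 32 := by nlinarith
    have h2 : C * R ^ (-μ) < m / 32 := by
      have := (mul_lt_mul_of_pos_left hRδ hC)
      calc C * R ^ (-μ) < C * (m / (32 * C)) := this
        _ = m / 32 := by field_simp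
    linarith
  -- Step 1: v' t ≥ v' 0 + (M/2) Ξ² t on [0,T]
  set c : ℝ := (M / 2) * Ξ ^ 2 with hc
  have step1 : ∀ t ∈ Set.Icc (0 : ℝ) T, v' 0 + c * t ≤ v' t := by
    have := mono_aux (f := fun t => v' t - c * t) (f' := fun t => v'' t - c)
      (fun t ht => ((hdv' t ht).sub ((hasDerivAt_id t).const_mul c)).congr_deriv (by ring))
      (fun t ht => by have := hv'' t ht; linarith)
    intro t ht
    have h := this t ht
    simp only [mul_zero, sub_zero] at h
    linarith
  -- Step 2: v t ≥ v 0 + v' 0 * t + c t²/2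
  have step2 : ∀ t ∈ Set.Icc (0 : ℝ) T, v 0 + v' 0 * t + c / 2 * t ^ 2 ≤ v t := by
    have := mono_aux (f := fun t => v t - v' 0 * t - c / 2 * t ^ 2)
      (f' := fun t => v' t - v' 0 - c * t)
      (fun t ht => by
        have h1 := (hdv t ht).sub ((hasDerivAt_id t).const_mul (v' 0))
        have h2 : HasDerivAt (fun t : ℝ => c / 2 * t ^ 2) (c / 2 * (2 * t)) t :=
          (hasDerivAt_pow 2 t).const_mul (c / 2) |>.congr_deriv (by push_cast; ring)
        exact (h1.sub h2).congr_deriv (by ring))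
      (fun t ht => by have := step1 t ht; linarith)
    intro t ht
    have h := this t ht
    simp only [mul_zero, sub_zero] at h
    norm_num at h
    linarith
  -- Conclude via quadratic estimate
  intro t ht
  have h2 := step2 t ht
  have ht0 : 0 ≤ t := ht.1
  have hs : 0 ≤ t * Ξ := mul_nonneg ht0 hΞ.le
  have hv'base : v' 0 ≥ -(m / 16) * X * Ξ := by
    have h1 : (4 * σ + C * R ^ (-μ)) * (X * Ξ) ≤ m / 16 * (X * Ξ) :=
      mul_le_mul_of_nonneg_right ha.le (mul_nonneg hX0.le hΞ.le)
    nlinarith [h1]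
  have hv' : v' 0 * t ≥ -(m / 16) * X * (t * Ξ) := by
    nlinarith [mul_le_mul_of_nonneg_right hv'base ht0]
  have hq : v 0 + v' 0 * t + c / 2 * t ^ 2 ≥ m / 16 * (X + t * Ξ) ^ 2 := by
    rw [hv00, hc]
    have hct : c / 2 * t ^ 2 = M / 4 * (t * Ξ) ^ 2 := by rw [hc]; ring
    set s := t * Ξ with hsdef
    have key : X ^ 2 + v' 0 * t + M / 4 * s ^ 2 ≥ m / 16 * (X + s) ^ 2 := by
      have h1 : v' 0 * t ≥ -(m / 16) * X * s := hv'
      have h2 := quad_aux hm0 hm1 hmM hX0.le hs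
      linarith
    calc X ^ 2 + v' 0 * t + M / 2 * Ξ ^ 2 / 2 * t ^ 2
        = X ^ 2 + v' 0 * t + M / 4 * s ^ 2 := by rw [hsdef]; ring
      _ ≥ m / 16 * (X + s) ^ 2 := key
  linarith
end
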